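/- Acyclicity of the combined order in the locality proof: Let E be an execution over a set of objects OBS, let Ē be an extension of E, and suppose that for every object X there is an interval-linearization Ŝ|_X = (S_X, →_X) of comp(Ē)|_X, where →_X is a (strict) total order on the set S_X of concurrency classes of X respecting the real-time precedence of operation calls in comp(Ē)|_X. Let S be the union of all the sets S_X, and define the relation → on S by: (i) →_X ⊆ → for every object X; and (ii) for every pair of distinct objects X and Y, for every operation a on X and operation b on Y with a preceding b in real time in comp(Ē) (the response of a occurs before the invocation of b), and for every responding class S' ∈ S_X containing an event of a and invoking class S'' ∈ S_Y containing an event of b, S' → S''. Then the relation → is acyclic. -/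

import Mathlib

/-! ## Executions over multiple objects, interval-sequential objects,
interval-linearizability -/

/-- An event: an invocation by a process of an operation of an object with an input
value, or a response to a process from an operation of an object with an output
value. -/
inductive GEv (Proc Obj Op In Out : Type) where
  | inv (p : Proc) (X : Obj) (o : Op) (x : In)
  | res (p : Proc) (X : Obj) (o : Op) (y : Out)
deriving DecidableEq

namespace GEv

variable {Proc Obj Op In Out : Type}

/-- The process of the event. -/
def proc : GEv Proc Obj Op In Out → Proc
  | .inv p _ _ _ => p
  | .res p _ _ _ => p

/-- The object of the event. -/
def obj : GEv Proc Obj Op In Out → Obj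
  | .inv _ X _ _ => X
  | .res _ X _ _ => X

/-- Is the event an invocation? -/
def isInv : GEv Proc Obj Op In Out → Bool
  | .inv _ _ _ _ => true
  | _ => false

/-- Is the event a response? -/
def isRes : GEv Proc Obj Op In Out → Bool
  | .res _ _ _ _ => true
  | _ => false

end GEv

variable {Proc Obj Op In Out : Type} [DecidableEq Proc] [DecidableEq Obj]
  [DecidableEq Op] [DecidableEq In] [DecidableEq Out]

/-- Projection of an execution onto a process. -/
def projP (E : List (GEv Proc Obj Op In Out)) (p : Proc) :
    List (GEv Proc Obj Op In Out) :=
  E.filter (fun e => decide (e.proc = p))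

/-- Projection of an execution onto an object. -/
def projObj (E : List (GEv Proc Obj Op In Out)) (X : Obj) :
    List (GEv Proc Obj Op In Out) :=
  E.filter (fun e => decide (e.obj = X))

/-- A single process's subsequence alternates invocations and matching responses,
beginning with an invocation. -/
def procAlt : List (GEv Proc Obj Op In Out) → Prop
  | [] => True
  | [GEv.inv _ _ _ _] => True
  | GEv.inv _ X o _ :: GEv.res _ X' o' _ :: rest => X = X' ∧ o = o' ∧ procAlt rest
  | _ => False

/-- A well-formed execution. -/
def WF (E : List (GEv Proc Obj Op In Out)) : Prop :=
  ∀ p : Proc, procAlt (projP E p)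

/-- `comp E`: the execution `E` with its pending invocations removed (in a
well-formed execution, an invocation is pending iff no later event is by the
same process). -/
def comp (E : List (GEv Proc Obj Op In Out)) : List (GEv Proc Obj Op In Out) :=
  (List.range E.length).filterMap (fun i =>
    (E[i]?).bind (fun e =>
      if e.isInv && (E.drop (i+1)).all (fun e' => !decide (e'.proc = e.proc))
      then none else some e))

/-- `Ebar` extends `E` by appending zero or more matching responses to pending
invocations (well-formedness of `Ebar` forces the appended responses to match). -/
def Extension (E Ebar : List (GEv Proc Obj Op In Out)) : Prop :=
  WF Ebar ∧ ∃ F, Ebar = E ++ F ∧ ∀ e ∈ F, e.isRes = true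

/-- Position `i` of `E` holds the `m`-th event (0-indexed) of process `p`. -/
def nthEvPos (E : List (GEv Proc Obj Op In Out)) (p : Proc) (m i : ℕ) : Prop :=
  (∃ e, E[i]? = some e ∧ GEv.proc e = p) ∧
  ((E.take i).filter (fun e => decide (e.proc = p))).length = m

/-- The `k`-th operation call of process `p` precedes the `l`-th operation call of
process `q` in real time in `E`: the response of the former (the `(2k+1)`-th event of
`p`) occurs before the invocation of the latter (the `2l`-th event of `q`). -/
def OpPrec (E : List (GEv Proc Obj Op In Out)) (p : Proc) (k : ℕ) (q : Proc)
    (l : ℕ) : Prop :=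
  ∃ i j : ℕ, nthEvPos E p (2*k+1) i ∧ nthEvPos E q (2*l) j ∧ i < j

/-- An invoking concurrency class: a nonempty finite set of invocations, at most one
per process. -/
def InvClass (C : Finset (GEv Proc Obj Op In Out)) : Prop :=
  C.Nonempty ∧ (∀ e ∈ C, e.isInv = true) ∧
    ∀ e ∈ C, ∀ e' ∈ C, e.proc = e'.proc → e = e'

/-- A responding concurrency class: a nonempty finite set of responses, at most one
per process. -/
def ResClass (C : Finset (GEv Proc Obj Op In Out)) : Prop :=
  C.Nonempty ∧ (∀ e ∈ C, e.isRes = true) ∧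
    ∀ e ∈ C, ∀ e' ∈ C, e.proc = e'.proc → e = e'

/-- An interval-sequential execution `I₀,R₀,I₁,R₁,…,I_m,R_m`, represented as a flat
list of concurrency classes: classes at even positions are invoking, classes at odd
positions are responding, and every response matches an earlier invocation with no
further invocation by the same process in between. -/
def IsISExec (h : List (Finset (GEv Proc Obj Op In Out))) : Prop :=
  h.length % 2 = 0 ∧
  (∀ k C, h[k]? = some C → if k % 2 = 0 then InvClass C else ResClass C) ∧
  (∀ i C r, h[i]? = some C → i % 2 = 1 → r ∈ C →
    ∃ j, j ≤ i ∧ j % 2 = 0 ∧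
      (∃ D, h[j]? = some D ∧ ∃ e ∈ D, e.isInv = true ∧ e.proc = r.proc) ∧
      ∀ j' D', j < j' → j' ≤ i → j' % 2 = 0 → h[j']? = some D' →
        ∀ e ∈ D', e.isInv = true → e.proc ≠ r.proc)

/-- An interval-sequential object: a Mealy automaton whose transitions, from a state
and a (nonempty) invoking concurrency class, produce a (nonempty) responding
concurrency class and a next state; the response uniquely determines the new state. -/
structure GISObject (Proc Obj Op In Out : Type) where
  State : Type
  init : Set State
  δ : State → Finset (GEv Proc Obj Op In Out) →
        Set (Finset (GEv Proc Obj Op In Out) × State)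
  valid : ∀ q I R q', (R, q') ∈ δ q I → InvClass I ∧ ResClass R
  det : ∀ q I R q1 q2, (R, q1) ∈ δ q I → (R, q2) ∈ δ q I → q1 = q2

/-- The interval-sequential specification of an object: all interval-sequential
executions generated from an initial state by the transition relation. -/
def GISS (O : GISObject Proc Obj Op In Out) :
    Set (List (Finset (GEv Proc Obj Op In Out))) :=
  { h | IsISExec h ∧ ∃ q : ℕ → O.State, q 0 ∈ O.init ∧
      ∀ i I R, h[2*i]? = some I → h[2*i+1]? = some R →
        (R, q (i+1)) ∈ O.δ (q i) I }

/-- Projection of an interval-sequential execution onto a process `p`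
(each class contains at most one event of `p`). -/
noncomputable def projPIS (h : List (Finset (GEv Proc Obj Op In Out))) (p : Proc) :
    List (GEv Proc Obj Op In Out) :=
  h.flatMap (fun C => (C.filter (fun e => e.proc = p)).toList)

/-- Projection of an interval-sequential execution onto an object `X`: each class is
replaced by its subset of events on `X`, and emptied classes are discarded. -/
def projObjIS (h : List (Finset (GEv Proc Obj Op In Out))) (X : Obj) :
    List (Finset (GEv Proc Obj Op In Out)) :=
  (h.map (fun C => C.filter (fun e => e.obj = X))).filter
    (fun C => decide C.Nonempty)

/-- The class at position `k` of `h` contains the `m`-th event (0-indexed) of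
process `p`. -/
def evInClassAt (h : List (Finset (GEv Proc Obj Op In Out))) (p : Proc)
    (m k : ℕ) : Prop :=
  (∃ C, h[k]? = some C ∧ ∃ e ∈ C, GEv.proc e = p) ∧
  ((h.take k).filter
      (fun C => decide (C.filter (fun e => e.proc = p)).Nonempty)).length = m

/-- The interval-sequential execution `h` respects the real-time order of `Ecomp`:
whenever an operation call precedes another, every class containing an event of the
first comes before every class containing an event of the second. -/
def Respects (Ecomp : List (GEv Proc Obj Op In Out))
    (h : List (Finset (GEv Proc Obj Op In Out))) : Prop :=
  ∀ (p : Proc) (k : ℕ) (q : Proc) (l : ℕ), OpPrec Ecomp p k q l →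
    ∀ m m' a b : ℕ, (m = 2*k ∨ m = 2*k+1) → (m' = 2*l ∨ m' = 2*l+1) →
      evInClassAt h p m a → evInClassAt h q m' b → a < b

/-- `E` is interval-linearizable with respect to the system of objects `spec`. -/
def GIntervalLin (spec : Obj → GISObject Proc Obj Op In Out)
    (E : List (GEv Proc Obj Op In Out)) : Prop :=
  ∃ Ebar h, Extension E Ebar ∧ IsISExec h ∧
    (∀ p, projP (comp Ebar) p = projPIS h p) ∧
    (∀ X, projObjIS h X ∈ GISS (spec X)) ∧
    Respects (comp Ebar) h

/-- `E` (an execution all of whose events are on one object) is interval-linearizable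
with respect to the single object `O`. -/
def GIntervalLinOn (O : GISObject Proc Obj Op In Out)
    (E : List (GEv Proc Obj Op In Out)) : Prop :=
  ∃ Ebar h, Extension E Ebar ∧ h ∈ GISS O ∧
    (∀ p, projP (comp Ebar) p = projPIS h p) ∧
    Respects (comp Ebar) h

/-! ## Statement: acyclicity of the combined order in the locality proof -/

/-- Position `i` of `E` holds the `m`-th event (0-indexed) of process `p` on object
`X`. -/
def nthEvPosOn (E : List (GEv Proc Obj Op In Out)) (X : Obj) (p : Proc)
    (m i : ℕ) : Prop :=
  (∃ e, E[i]? = some e ∧ GEv.proc e = p ∧ GEv.obj e = X) ∧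
  ((E.take i).filter (fun e => decide (e.proc = p ∧ e.obj = X))).length = m

/-- The `k`-th operation call of `p` on object `X` precedes the `l`-th operation call
of `q` on object `Y` in real time in `E`: the response of the former occurs before
the invocation of the latter. -/
def opPrecOn (E : List (GEv Proc Obj Op In Out)) (X : Obj) (p : Proc) (k : ℕ)
    (Y : Obj) (q : Proc) (l : ℕ) : Prop :=
  ∃ i j : ℕ, nthEvPosOn E X p (2*k+1) i ∧ nthEvPosOn E Y q (2*l) j ∧ i < j

/-- The class at position `c` of the linearization `h X` of object `X` contains an
event of the `k`-th operation call of process `p` on `X`. -/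
def classHasOp (h : Obj → List (Finset (GEv Proc Obj Op In Out))) (X : Obj)
    (p : Proc) (k c : ℕ) : Prop :=
  ∃ m : ℕ, (m = 2*k ∨ m = 2*k+1) ∧ evInClassAt (h X) p m c

/-- The combined relation `→` on the concurrency classes of the per-object
linearizations (a class is identified by its object and its position): (i) the total
order of each linearization, and (ii) from a responding class of `X` containing an
event of an operation `a` to an invoking class of a distinct object `Y` containing an
event of an operation `b`, whenever `a` precedes `b` in real time in `C`. -/
def locRel (C : List (GEv Proc Obj Op In Out))
    (h : Obj → List (Finset (GEv Proc Obj Op In Out))) :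
    Obj × ℕ → Obj × ℕ → Prop :=
  fun a b =>
    (a.1 = b.1 ∧ a.2 < b.2 ∧ b.2 < (h a.1).length)
    ∨ (a.1 ≠ b.1 ∧ a.2 % 2 = 1 ∧ b.2 % 2 = 0 ∧
        a.2 < (h a.1).length ∧ b.2 < (h b.1).length ∧
        ∃ (p : Proc) (k : ℕ) (q : Proc) (l : ℕ),
          opPrecOn C a.1 p k b.1 q l ∧
          classHasOp h a.1 p k a.2 ∧ classHasOp h b.1 q l b.2)
/-! A path of `→` can only leave an object `X` through a response and later re-enter it
through an invocation. Along any path from `a` to `b` one therefore keeps a witness: either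
`a` and `b` are classes of the same object in increasing order, or some response of an
operation with a class at or after `a` precedes, in real time, some invocation of an operation
with a class at or before `b`. Composing two such witnesses through an intermediate class `b`
cannot fail: an invocation at or before `b` preceded by a response at or after `b` on the same
object would contradict that the linearization of that object respects real time. A witness
from `a` to `a` is impossible for the same reason, so `→` has no cycle. -/

theorem List.length_filter_take_lt_of_getElem? {α : Type*} {l : List α} {p : α → Bool}
    {i j : ℕ} {a : α} (ha : l[i]? = some a) (hpa : p a) (hij : i < j) :
    ((l.take i).filter p).length < ((l.take j).filter p).length := by
  have hsucc : ((l.take (i + 1)).filter p).length = ((l.take i).filter p).length + 1 := by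
    simp [List.take_add_one, ha, hpa]
  have hprefix : l.take (i + 1) <+: l.take j := by
    simpa [List.take_take, Nat.min_eq_left hij] using List.take_prefix (i + 1) (l.take j)
  have := (hprefix.filter p).length_le
  omega

section Projection

omit [DecidableEq Op] [DecidableEq In] [DecidableEq Out]

variable {C : List (GEv Proc Obj Op In Out)} {X : Obj}

theorem filter_proc_projObj (L : List (GEv Proc Obj Op In Out)) (X : Obj) (p : Proc) :
    (projObj L X).filter (fun e => decide (e.proc = p))
      = L.filter (fun e => decide (e.proc = p ∧ e.obj = X)) := by
  simp only [projObj, List.filter_filter, Bool.decide_and, Bool.and_comm]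

theorem nthEvPosOn.nthEvPos_projObj {p : Proc} {m i : ℕ} (hp : nthEvPosOn C X p m i) :
    nthEvPos (projObj C X) p m (projObj (C.take i) X).length := by
  obtain ⟨⟨e, he, hep, heX⟩, hcount⟩ := hp
  have hsplit : C = C.take i ++ e :: C.drop (i + 1) := by
    obtain ⟨hi, rfl⟩ := List.getElem?_eq_some_iff.mp he
    rw [← List.drop_eq_getElem_cons hi, List.take_append_drop]
  have hproj : projObj C X = projObj (C.take i) X ++ e :: projObj (C.drop (i + 1)) X := by
    conv_lhs => rw [hsplit]
    simp [projObj, heX]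
  refine ⟨⟨e, ?_, hep⟩, ?_⟩
  · simp [hproj]
  · rw [hproj, List.take_left, filter_proc_projObj, hcount]

theorem opPrecOn.opPrec_projObj {p q : Proc} {k l : ℕ} (hop : opPrecOn C X p k X q l) :
    OpPrec (projObj C X) p k q l := by
  obtain ⟨i, j, hi, hj, hij⟩ := hop
  obtain ⟨e, he, -, heX⟩ := hi.1
  exact ⟨_, _, hi.nthEvPos_projObj, hj.nthEvPos_projObj,
    List.length_filter_take_lt_of_getElem? he (decide_eq_true heX) hij⟩

theorem Respects.lt_of_opPrecOn {h : Obj → List (Finset (GEv Proc Obj Op In Out))}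
    {p q : Proc} {k l c c' : ℕ} (hresp : Respects (projObj C X) (h X))
    (hop : opPrecOn C X p k X q l) (hc : classHasOp h X p k c) (hc' : classHasOp h X q l c') :
    c < c' := by
  obtain ⟨m, hm, hmc⟩ := hc
  obtain ⟨m', hm', hmc'⟩ := hc'
  exact hresp p k q l hop.opPrec_projObj m m' c c' hm hm' hmc hmc'

end Projection

section Witness

omit [DecidableEq Op] [DecidableEq In] [DecidableEq Out]

def RespondsAtOrAfter (C : List (GEv Proc Obj Op In Out))
    (h : Obj → List (Finset (GEv Proc Obj Op In Out))) (a : Obj × ℕ) (i : ℕ) : Prop :=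
  ∃ (p : Proc) (k c : ℕ), a.2 ≤ c ∧ classHasOp h a.1 p k c ∧ nthEvPosOn C a.1 p (2*k+1) i

def InvokesAtOrBefore (C : List (GEv Proc Obj Op In Out))
    (h : Obj → List (Finset (GEv Proc Obj Op In Out))) (b : Obj × ℕ) (j : ℕ) : Prop :=
  ∃ (q : Proc) (l c : ℕ), c ≤ b.2 ∧ classHasOp h b.1 q l c ∧ nthEvPosOn C b.1 q (2*l) j

def LocReaches (C : List (GEv Proc Obj Op In Out))
    (h : Obj → List (Finset (GEv Proc Obj Op In Out))) (a b : Obj × ℕ) : Prop :=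
  (a.1 = b.1 ∧ a.2 < b.2) ∨
    ∃ i j, i < j ∧ RespondsAtOrAfter C h a i ∧ InvokesAtOrBefore C h b j

variable {C : List (GEv Proc Obj Op In Out)} {h : Obj → List (Finset (GEv Proc Obj Op In Out))}

theorem RespondsAtOrAfter.mono {a b : Obj × ℕ} {i : ℕ} (hi : RespondsAtOrAfter C h a i)
    (hobj : a.1 = b.1) (hle : b.2 ≤ a.2) : RespondsAtOrAfter C h b i := by
  obtain ⟨p, k, c, hc, hpc, hpi⟩ := hi
  rw [hobj] at hpc hpi
  exact ⟨p, k, c, hle.trans hc, hpc, hpi⟩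

theorem InvokesAtOrBefore.mono {a b : Obj × ℕ} {j : ℕ} (hj : InvokesAtOrBefore C h a j)
    (hobj : a.1 = b.1) (hle : a.2 ≤ b.2) : InvokesAtOrBefore C h b j := by
  obtain ⟨q, l, c, hc, hqc, hqj⟩ := hj
  rw [hobj] at hqc hqj
  exact ⟨q, l, c, hc.trans hle, hqc, hqj⟩

theorem Respects.lt_of_respondsAtOrAfter_of_invokesAtOrBefore {X : Obj} {c c' i j : ℕ}
    (hresp : Respects (projObj C X) (h X)) (hi : RespondsAtOrAfter C h (X, c) i)
    (hj : InvokesAtOrBefore C h (X, c') j) (hij : i < j) : c < c' := by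
  obtain ⟨p, k, ca, hca, hpc, hpi⟩ := hi
  obtain ⟨q, l, cb, hcb, hqc, hqj⟩ := hj
  have := hresp.lt_of_opPrecOn ⟨i, j, hpi, hqj, hij⟩ hpc hqc
  omega

theorem locReaches_of_locRel {a b : Obj × ℕ} (hab : locRel C h a b) : LocReaches C h a b := by
  rcases hab with
    ⟨hobj, hlt, -⟩ | ⟨-, -, -, -, -, p, k, q, l, ⟨i, j, hi, hj, hij⟩, hpc, hqc⟩
  · exact Or.inl ⟨hobj, hlt⟩
  · exact Or.inr
      ⟨i, j, hij, ⟨p, k, a.2, le_rfl, hpc, hi⟩, ⟨q, l, b.2, le_rfl, hqc, hj⟩⟩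

theorem LocReaches.trans (hresp : ∀ X, Respects (projObj C X) (h X)) {a b c : Obj × ℕ}
    (hab : LocReaches C h a b) (hbc : LocReaches C h b c) : LocReaches C h a c := by
  rcases hab with ⟨hab₁, hab₂⟩ | ⟨i, j, hij, hi, hj⟩ <;>
    rcases hbc with ⟨hbc₁, hbc₂⟩ | ⟨i', j', hij', hi', hj'⟩
  · exact Or.inl ⟨hab₁.trans hbc₁, hab₂.trans hbc₂⟩
  · exact Or.inr ⟨i', j', hij', hi'.mono hab₁.symm hab₂.le, hj'⟩
  · exact Or.inr ⟨i, j, hij, hi, hj.mono hbc₁ hbc₂.le⟩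
  · have hji' : j ≤ i' := by
      by_contra! hlt
      exact lt_irrefl _ ((hresp b.1).lt_of_respondsAtOrAfter_of_invokesAtOrBefore hi' hj hlt)
    exact Or.inr ⟨i, j', by omega, hi, hj'⟩

theorem not_locReaches_self (hresp : ∀ X, Respects (projObj C X) (h X)) (a : Obj × ℕ) :
    ¬ LocReaches C h a a := by
  rintro (⟨-, hlt⟩ | ⟨i, j, hij, hi, hj⟩)
  · exact lt_irrefl _ hlt
  · exact lt_irrefl _ ((hresp a.1).lt_of_respondsAtOrAfter_of_invokesAtOrBefore hi hj hij)

end Witness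

theorem locality_relation_acyclic_general
    (Ebar : List (GEv Proc Obj Op In Out))
    (h : Obj → List (Finset (GEv Proc Obj Op In Out)))
    (hresp : ∀ X, Respects (projObj (comp Ebar) X) (h X)) :
    ∀ c : Obj × ℕ, ¬ Relation.TransGen (locRel (comp Ebar) h) c c := by
  have : IsTrans (Obj × ℕ) (LocReaches (comp Ebar) h) :=
    ⟨fun _ _ _ => LocReaches.trans hresp⟩
  have hreaches : Relation.TransGen (locRel (comp Ebar) h) ≤ LocReaches (comp Ebar) h :=
    Relation.transGen_minimal fun _ _ => locReaches_of_locRel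
  exact fun c hc => not_locReaches_self hresp c (hreaches c c hc)

/-- **Acyclicity of the combined order in the locality proof.** Let `Ē` be an
extension of a well-formed execution `E`, and suppose that for every object `X` the
interval-sequential execution `h X` is an interval-linearization of `comp Ē |_X`
(same per-process projections, respecting the real-time precedence of operation calls
of `comp Ē |_X`). Then the combined relation `→` on the concurrency classes is
acyclic. -/
theorem locality_relation_acyclic
    (E Ebar : List (GEv Proc Obj Op In Out)) (hwf : WF E)
    (hext : Extension E Ebar)
    (h : Obj → List (Finset (GEv Proc Obj Op In Out)))
    (hIS : ∀ X, IsISExec (h X))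
    (hproj : ∀ X p, projP (projObj (comp Ebar) X) p = projPIS (h X) p)
    (hresp : ∀ X, Respects (projObj (comp Ebar) X) (h X)) :
    ∀ c : Obj × ℕ, ¬ Relation.TransGen (locRel (comp Ebar) h) c c :=
  locality_relation_acyclic_general Ebar h hresp
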